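/- arXiv:1306.1188 — 2 statements merged into one kernel-verified Lean document; each statement's English description precedes it below -/
import Mathlib

section
/- For all positive integers m, n there exist constants c, C > 0, depending only on m and n, with the following property. For all real n×m matrices D, E with ‖D‖ ≤ c, the function t ↦ √(det(Iₘ + (D+tE)ᵀ(D+tE))) is differentiable at t = 0 and | d/dt|_{t=0} √(det(Iₘ + (D+tE)ᵀ(D+tE))) − D : E | ≤ C ‖D‖³ ‖E‖. -/
/-!
Put `M = 1 + DᵀD`. Jacobi's formula differentiates the determinant along the curve
`t ↦ 1 + (D + tE)ᵀ(D + tE)`, whose velocity at `0` is `DᵀE + EᵀD`; since `M` is symmetric, the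
derivative of the square root of the determinant is `v = √(det M) · tr(M⁻¹ DᵀE)`. Hence
`v - D : E = tr((√(det M) M⁻¹ - 1) DᵀE)`, and the matrix `√(det(1 + A)) (1 + A)⁻¹ - 1` is a
differentiable function of `A` vanishing at `A = 0`, so it is `O(‖A‖)` near `0`. With `A = DᵀD`
and Cauchy–Schwarz for the Frobenius inner product this gives `|v - D : E| ≤ C ‖D‖³ ‖E‖`.
-/

open Matrix

/-- The Hilbert–Schmidt (Frobenius) norm of a matrix. -/
noncomputable def hsNorm {n m : ℕ} (D : Matrix (Fin n) (Fin m) ℝ) : ℝ :=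
  Real.sqrt ((Dᵀ * D).trace)

open Polynomial

attribute [local instance] Matrix.frobeniusNormedAddCommGroup Matrix.frobeniusNormedSpace
  Matrix.frobeniusNormedRing Matrix.frobeniusNormedAlgebra

theorem DifferentiableAt.exists_norm_sub_le {𝕜 E F : Type*} [NontriviallyNormedField 𝕜]
    [NormedAddCommGroup E] [NormedSpace 𝕜 E] [NormedAddCommGroup F] [NormedSpace 𝕜 F]
    {f : E → F} {x : E} (hf : DifferentiableAt 𝕜 f x) :
    ∃ r K : ℝ, 0 < r ∧ 0 < K ∧ ∀ y, ‖y - x‖ ≤ r → ‖f y - f x‖ ≤ K * ‖y - x‖ := by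
  obtain ⟨K, hK, hO⟩ := hf.hasFDerivAt.isBigO_sub.exists_pos
  obtain ⟨ε, hε, hball⟩ := Metric.eventually_nhds_iff.mp hO.bound
  refine ⟨ε / 2, K, half_pos hε, hK, fun y hy => hball ?_⟩
  rw [dist_eq_norm]
  linarith

namespace Matrix

section Frobenius

variable {m n : Type*} [Fintype m] [Fintype n]

-- The Frobenius norm is by definition the norm of the nested `PiLp 2` space of rows.
theorem trace_mul_eq_inner (X : Matrix m n ℝ) (E : Matrix n m ℝ) :
    (X * E).trace = inner ℝ (WithLp.toLp 2 fun i => WithLp.toLp 2 (X i))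
      (WithLp.toLp 2 fun i => WithLp.toLp 2 (Eᵀ i)) := by
  simp [PiLp.inner_apply, trace, mul_apply, mul_comm]

theorem abs_trace_mul_le (X : Matrix m n ℝ) (E : Matrix n m ℝ) :
    |(X * E).trace| ≤ ‖X‖ * ‖E‖ := by
  rw [trace_mul_eq_inner, ← frobenius_norm_transpose E]
  exact abs_real_inner_le_norm _ _

theorem sqrt_trace_transpose_mul_self (D : Matrix n m ℝ) : √(Dᵀ * D).trace = ‖D‖ := by
  rw [trace_mul_eq_inner, real_inner_self_eq_norm_sq, Real.sqrt_sq (norm_nonneg _),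
    ← frobenius_norm_transpose D]
  rfl

end Frobenius

section Determinant

variable {n : Type*} [Fintype n] [DecidableEq n]

theorem differentiable_det : Differentiable ℝ fun A : Matrix n n ℝ => A.det := by
  simp only [det_apply']
  fun_prop

theorem hasDerivAt_det_one_add_smul (H : Matrix n n ℝ) :
    HasDerivAt (fun t : ℝ => (1 + t • H).det) H.trace 0 := by
  have heval (t : ℝ) : (det (1 + (X : ℝ[X]) • H.map C)).eval t = (1 + t • H).det := by
    rw [← coe_evalRingHom, RingHom.map_det, RingHom.mapMatrix_apply]
    congr 1
    ext i j
    simp [one_apply, apply_ite, mul_comm t]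
  have hP := (det (1 + (X : ℝ[X]) • H.map C)).hasDerivAt 0
  rw [derivative_det_one_add_X_smul] at hP
  simpa only [heval] using hP

end Determinant

end Matrix

theorem HasDerivAt.det {n : Type*} [Fintype n] [DecidableEq n] {A : ℝ → Matrix n n ℝ}
    {A' : Matrix n n ℝ} {t : ℝ} (hA : HasDerivAt A A' t) (hdet : IsUnit (A t).det) :
    HasDerivAt (fun s => (A s).det) ((A t).det * ((A t)⁻¹ * A').trace) t := by
  set M := A t
  have hline : HasDerivAt (fun s : ℝ => (M + s • A').det) (M.det * (M⁻¹ * A').trace) 0 := by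
    have hfactor : (fun s : ℝ => (M + s • A').det)
        = fun s => M.det * (1 + s • (M⁻¹ * A')).det := by
      funext s
      rw [← det_mul, mul_add, mul_one, Matrix.mul_smul, mul_nonsing_inv_cancel_left _ _ hdet]
    rw [hfactor]
    exact (hasDerivAt_det_one_add_smul _).const_mul _
  -- `det` is differentiable, so its derivative in direction `A'` can be read off along a line.
  have hfderiv := (differentiable_det M).hasFDerivAt
  have hdirectional := (hfderiv.comp_hasDerivAt_of_eq (0 : ℝ)
    (((hasDerivAt_id 0).smul_const A').const_add M) (by simp)).unique hline
  rw [one_smul] at hdirectional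
  rw [← hdirectional]
  exact hfderiv.comp_hasDerivAt t hA

namespace Matrix

variable {m n : Type*} [Fintype m] [Fintype n] [DecidableEq m]

theorem det_one_add_transpose_mul_self_pos (D : Matrix n m ℝ) : 0 < (1 + Dᵀ * D).det := by
  have hD : (Dᵀ * D).PosSemidef := by
    simpa only [conjTranspose_eq_transpose_of_trivial] using posSemidef_conjTranspose_mul_self D
  exact (PosDef.one.add_posSemidef hD).det_pos

omit [DecidableEq m] in
theorem trace_mul_transpose_of_isSymm {S : Matrix m m ℝ} (hS : S.IsSymm) (P : Matrix m m ℝ) :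
    (S * Pᵀ).trace = (S * P).trace := by
  rw [← trace_transpose, transpose_mul, transpose_transpose, hS.eq, trace_mul_comm]

theorem hasDerivAt_one_add_transpose_mul_self (D E : Matrix n m ℝ) :
    HasDerivAt (fun t : ℝ => 1 + (D + t • E)ᵀ * (D + t • E)) (Dᵀ * E + Eᵀ * D) 0 := by
  have hexpand : (fun t : ℝ => 1 + (D + t • E)ᵀ * (D + t • E))
      = fun t => (1 + Dᵀ * D) + t • (Dᵀ * E + Eᵀ * D) + t ^ 2 • (Eᵀ * E) := by
    funext t
    simp only [transpose_add, transpose_smul, Matrix.add_mul, Matrix.mul_add, Matrix.smul_mul,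
      Matrix.mul_smul, smul_smul, smul_add, pow_two]
    abel
  have h := (((hasDerivAt_id (0 : ℝ)).smul_const (Dᵀ * E + Eᵀ * D)).const_add
    (1 + Dᵀ * D)).add ((hasDerivAt_pow 2 (0 : ℝ)).smul_const (Eᵀ * E))
  rw [hexpand]
  exact h.congr_deriv (by simp)

theorem hasDerivAt_sqrt_det_one_add_transpose_mul_self (D E : Matrix n m ℝ) :
    HasDerivAt (fun t : ℝ => √(1 + (D + t • E)ᵀ * (D + t • E)).det)
      (√(1 + Dᵀ * D).det * ((1 + Dᵀ * D)⁻¹ * (Dᵀ * E)).trace) 0 := by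
  have hpos := det_one_add_transpose_mul_self_pos D
  have hdet : HasDerivAt (fun t : ℝ => (1 + (D + t • E)ᵀ * (D + t • E)).det)
      ((1 + Dᵀ * D).det * ((1 + Dᵀ * D)⁻¹ * (Dᵀ * E + Eᵀ * D)).trace) 0 := by
    simpa using (hasDerivAt_one_add_transpose_mul_self D E).det (by simpa using hpos.ne')
  have hsqrt := hdet.sqrt (by simpa using hpos.ne')
  have hsymm : (1 + Dᵀ * D)⁻¹.IsSymm := by
    refine IsSymm.inv ?_
    rw [IsSymm, transpose_add, transpose_one, transpose_mul, transpose_transpose]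
  have htrace : ((1 + Dᵀ * D)⁻¹ * (Dᵀ * E + Eᵀ * D)).trace
      = 2 * ((1 + Dᵀ * D)⁻¹ * (Dᵀ * E)).trace := by
    have hEtD : Eᵀ * D = (Dᵀ * E)ᵀ := by rw [transpose_mul, transpose_transpose]
    rw [mul_add, trace_add, hEtD, trace_mul_transpose_of_isSymm hsymm]
    ring
  simp only [zero_smul, add_zero, htrace] at hsqrt
  convert hsqrt using 1
  have hs : √(1 + Dᵀ * D).det ^ 2 = (1 + Dᵀ * D).det := Real.sq_sqrt hpos.le
  field_simp
  rw [hs]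
  ring

theorem exists_norm_sqrt_det_smul_inv_sub_one_le :
    ∃ r K : ℝ, 0 < r ∧ 0 < K ∧ ∀ A : Matrix m m ℝ, ‖A‖ ≤ r →
      ‖√(1 + A).det • (1 + A)⁻¹ - 1‖ ≤ K * ‖A‖ := by
  have hshift : DifferentiableAt ℝ (fun A : Matrix m m ℝ => 1 + A) 0 :=
    differentiableAt_id.const_add 1
  have hsqrt : DifferentiableAt ℝ (fun A : Matrix m m ℝ => √(1 + A).det) 0 :=
    ((differentiable_det _).comp 0 hshift).sqrt (show (1 + 0 : Matrix m m ℝ).det ≠ 0 by simp)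
  have hinv : DifferentiableAt ℝ (fun A : Matrix m m ℝ => Ring.inverse (1 + A)) 0 :=
    (differentiableAt_inverse (x := (1 + 0 : Matrix m m ℝ)) (by simp)).comp 0 hshift
  obtain ⟨r, K, hr, hK, h⟩ := (hsqrt.smul hinv).exists_norm_sub_le
  refine ⟨r, K, hr, hK, fun A hA => ?_⟩
  simpa [nonsing_inv_eq_ringInverse] using h A (by simpa using hA)

end Matrix

theorem deriv_area_integrand_general (m n : ℕ) :
    ∃ c C : ℝ, 0 < c ∧ 0 < C ∧
      ∀ D E : Matrix (Fin n) (Fin m) ℝ, hsNorm D ≤ c →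
        ∃ v : ℝ,
          HasDerivAt (fun t : ℝ => Real.sqrt ((1 + (D + t • E)ᵀ * (D + t • E)).det)) v 0 ∧
          |v - (Dᵀ * E).trace| ≤ C * (hsNorm D) ^ 3 * hsNorm E := by
  obtain ⟨r, K, hr, hK, hZ⟩ := exists_norm_sqrt_det_smul_inv_sub_one_le (m := Fin m)
  refine ⟨√r, K, Real.sqrt_pos.mpr hr, hK, fun D E hD => ⟨_,
    hasDerivAt_sqrt_det_one_add_transpose_mul_self D E, ?_⟩⟩
  simp only [hsNorm, sqrt_trace_transpose_mul_self] at hD ⊢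
  have hDD : ‖Dᵀ * D‖ ≤ ‖D‖ ^ 2 := by
    simpa [frobenius_norm_transpose, sq] using frobenius_norm_mul Dᵀ D
  have hDDr : ‖Dᵀ * D‖ ≤ r := by
    have := pow_le_pow_left₀ (norm_nonneg D) hD 2
    rw [Real.sq_sqrt hr.le] at this
    linarith
  set Z := √(1 + Dᵀ * D).det • (1 + Dᵀ * D)⁻¹ - 1
  calc |√(1 + Dᵀ * D).det * ((1 + Dᵀ * D)⁻¹ * (Dᵀ * E)).trace - (Dᵀ * E).trace|
      = |(Z * Dᵀ * E).trace| := by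
        rw [Matrix.mul_assoc, sub_mul, trace_sub, smul_mul, trace_smul, one_mul, smul_eq_mul]
    _ ≤ ‖Z‖ * ‖D‖ * ‖E‖ := by
        grw [abs_trace_mul_le, frobenius_norm_mul, frobenius_norm_transpose]
    _ ≤ K * ‖D‖ ^ 2 * ‖D‖ * ‖E‖ := by grw [hZ _ hDDr, hDD]
    _ = K * ‖D‖ ^ 3 * ‖E‖ := by ring

/-- For all positive integers `m, n` there exist constants `c, C > 0`,
depending only on `m` and `n`, such that for all real `n×m` matrices `D, E` with `‖D‖ ≤ c`,
the function `t ↦ √(det(Iₘ + (D+tE)ᵀ(D+tE)))` is differentiable at `t = 0` and its derivative `v`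
satisfies `|v − D : E| ≤ C ‖D‖³ ‖E‖`, where `D : E = tr(Dᵀ E)`. -/
theorem deriv_area_integrand (m n : ℕ) (hm : 0 < m) (hn : 0 < n) :
    ∃ c C : ℝ, 0 < c ∧ 0 < C ∧
      ∀ D E : Matrix (Fin n) (Fin m) ℝ, hsNorm D ≤ c →
        ∃ v : ℝ,
          HasDerivAt (fun t : ℝ => Real.sqrt ((1 + (D + t • E)ᵀ * (D + t • E)).det)) v 0 ∧
          |v - (Dᵀ * E).trace| ≤ C * (hsNorm D) ^ 3 * hsNorm E :=
  deriv_area_integrand_general m n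
end

section
/- For all positive integers m, n there exist constants c, C > 0, depending only on m and n, such that for all real n×m matrices D, A with ‖D‖ ≤ c and ‖A‖ ≤ c one has | 2√(det(Iₘ + Dᵀ D)) − 2 det(Iₘ + Dᵀ A) / √(det(Iₘ + Aᵀ A)) − ‖D − A‖² | ≤ C ( ‖D‖⁴ + ‖A‖⁴ ). -/
open Matrix

/-!
Expanding `det (1 + M)` into principal minors gives `1 + tr M` plus minors of size at least two,
each of which is quadratically small in the entries of `M`. Applied to `M = DᵀD, DᵀA, AᵀA`, this
shows that the three determinants are `1 + p`, `1 + r`, `1 + q` with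
`p = ‖D‖² + O(u²)`, `r = tr (DᵀA) + O(u²)`, `q = ‖A‖² + O(u²)`, where `u = ‖D‖² + ‖A‖²`.
The second-order Taylor expansions of `√(1 + x)` and `1 / √(1 + x)` then give
`2√(1 + p) - 2 (1 + r) / √(1 + q) = p + q - 2r + O(u²)`, and `‖D‖² + ‖A‖² - 2 tr (DᵀA)` is
exactly `‖D - A‖²`.
-/

open Finset
open scoped Nat

attribute [local instance] Matrix.frobeniusNormedAddCommGroup

namespace Matrix

section PrincipalMinors

variable {n R : Type*} [Fintype n] [DecidableEq n] [CommRing R]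

theorem det_one_add_eq_sum_det_submatrix (M : Matrix n n R) :
    (1 + M).det = ∑ s : Finset n, (M.submatrix ((↑) : s → n) (↑)).det := by
  simp_rw [← det_piecewise_one_eq_submatrix_det, add_comm (1 : Matrix n n R)]
  exact (detRowAlternating : (n → R) [⋀^n]→ₗ[R] R).map_add_univ M.row (1 : Matrix n n R).row

theorem sum_det_submatrix_card_lt_two (M : Matrix n n R) :
    ∑ s ∈ univ.filter (fun s : Finset n => #s < 2), (M.submatrix ((↑) : s → n) (↑)).det
      = 1 + M.trace := by
  have : univ.filter (fun s : Finset n => #s < 2)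
      = insert ∅ (univ.map ⟨singleton, singleton_injective⟩) := by
    ext s
    simp [Nat.le_one_iff_eq_zero_or_eq_one, card_eq_one, eq_comm]
  rw [this, sum_insert (by simp), sum_map]
  simp [trace]

theorem abs_det_one_add_sub_one_sub_trace_le {σ : ℝ} (hσ₀ : 0 ≤ σ) (hσ₁ : σ ≤ 1)
    (M : Matrix n n ℝ) (hM : ∀ i j, |M i j| ≤ σ) :
    |(1 + M).det - 1 - M.trace| ≤ 2 ^ Fintype.card n * (Fintype.card n)! * σ ^ 2 := by
  set minor := fun s : Finset n => (M.submatrix ((↑) : s → n) (↑)).det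
  have hminor : ∀ s ∈ univ.filter (fun s : Finset n => ¬#s < 2),
      |minor s| ≤ (Fintype.card n)! * σ ^ 2 := by
    intro s hs
    have hs₂ : 1 < #s := by simpa using hs
    calc |minor s| ≤ (#s)! * σ ^ #s := by
          simpa using det_le (A := M.submatrix ((↑) : s → n) (↑))
            (abv := AbsoluteValue.abs) fun i j => hM i j
      _ ≤ (Fintype.card n)! * σ ^ 2 :=
          mul_le_mul (mod_cast Nat.factorial_le (card_le_univ s))
            (pow_le_pow_of_le_one hσ₀ hσ₁ hs₂) (by positivity) (by positivity)
  have hsplit : (1 + M).det - 1 - M.trace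
      = ∑ s ∈ univ.filter (fun s : Finset n => ¬#s < 2), minor s := by
    rw [det_one_add_eq_sum_det_submatrix, ← sum_filter_add_sum_filter_not univ (fun s => #s < 2),
      sum_det_submatrix_card_lt_two]
    ring
  calc |(1 + M).det - 1 - M.trace|
      ≤ ∑ s ∈ univ.filter (fun s : Finset n => ¬#s < 2), |minor s| :=
        hsplit ▸ abs_sum_le_sum_abs _ _
    _ ≤ #(univ.filter (fun s : Finset n => ¬#s < 2)) • ((Fintype.card n)! * σ ^ 2) :=
        sum_le_card_nsmul _ _ _ hminor
    _ ≤ 2 ^ Fintype.card n * (Fintype.card n)! * σ ^ 2 := by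
        rw [nsmul_eq_mul, mul_assoc]
        gcongr
        exact_mod_cast (card_filter_le _ _).trans_eq (by simp)

end PrincipalMinors

section Frobenius

variable {m n : Type*} [Fintype m] [Fintype n]

theorem frobenius_norm_sq_eq_trace (D : Matrix m n ℝ) : ‖D‖ ^ 2 = (Dᵀ * D).trace := by
  rw [frobenius_norm_def, ← Real.sqrt_eq_rpow, Real.sq_sqrt (by positivity), trace, sum_comm]
  simp [mul_apply, sq]

theorem abs_apply_le_frobenius_norm (D : Matrix m n ℝ) (i : m) (j : n) : |D i j| ≤ ‖D‖ :=
  (PiLp.norm_apply_le (WithLp.toLp 2 fun i => WithLp.toLp 2 (D i)) i).trans'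
    (PiLp.norm_apply_le (WithLp.toLp 2 (D i)) j)

theorem frobenius_norm_transpose_mul_le (D A : Matrix m n ℝ) : ‖Dᵀ * A‖ ≤ ‖D‖ * ‖A‖ :=
  frobenius_norm_transpose D ▸ frobenius_norm_mul Dᵀ A

theorem frobenius_norm_sub_sq (D A : Matrix m n ℝ) :
    ‖D - A‖ ^ 2 = ‖D‖ ^ 2 + ‖A‖ ^ 2 - 2 * (Dᵀ * A).trace := by
  rw [frobenius_norm_sq_eq_trace, frobenius_norm_sq_eq_trace, frobenius_norm_sq_eq_trace,
    transpose_sub, Matrix.sub_mul, Matrix.mul_sub, Matrix.mul_sub, trace_sub, trace_sub, trace_sub,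
    ← trace_transpose (Aᵀ * D), transpose_mul, transpose_transpose]
  ring

theorem abs_trace_transpose_mul_le (D A : Matrix m n ℝ) :
    |(Dᵀ * A).trace| ≤ (‖D‖ ^ 2 + ‖A‖ ^ 2) / 2 := by
  have hadd := frobenius_norm_sub_sq D (-A)
  rw [sub_neg_eq_add, norm_neg, Matrix.mul_neg, trace_neg] at hadd
  have hsub := frobenius_norm_sub_sq D A
  rw [abs_le]
  constructor <;> nlinarith [sq_nonneg ‖D + A‖, sq_nonneg ‖D - A‖]

theorem abs_det_one_add_transpose_mul_sub_le [DecidableEq n] {u : ℝ} (hu : u ≤ 1)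
    (D A : Matrix m n ℝ) (h : ‖D‖ * ‖A‖ ≤ u) :
    |(1 + Dᵀ * A).det - 1 - (Dᵀ * A).trace| ≤ 2 ^ Fintype.card n * (Fintype.card n)! * u ^ 2 :=
  abs_det_one_add_sub_one_sub_trace_le ((by positivity : 0 ≤ ‖D‖ * ‖A‖).trans h) hu _
    fun i j => (abs_apply_le_frobenius_norm _ i j).trans
      ((frobenius_norm_transpose_mul_le D A).trans h)

end Frobenius

end Matrix

theorem Real.abs_sqrt_one_add_sub_le {x : ℝ} (hx : |x| ≤ 1 / 2) :
    |√(1 + x) - 1 - x / 2| ≤ x ^ 2 := by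
  obtain ⟨hx₁, hx₂⟩ := abs_le.mp hx
  have hs : √(1 + x) ^ 2 = 1 + x := Real.sq_sqrt (by linarith)
  have hs₀ := Real.sqrt_nonneg (1 + x)
  rw [abs_le]
  constructor
  · nlinarith [sq_nonneg (√(1 + x) - (1 + x / 2 - x ^ 2)), sq_nonneg x]
  · nlinarith [sq_nonneg (√(1 + x) - (1 + x / 2)), sq_nonneg x]

theorem Real.abs_inv_sqrt_one_add_sub_le {x : ℝ} (hx : |x| ≤ 1 / 2) :
    |(√(1 + x))⁻¹ - (1 - x / 2)| ≤ x ^ 2 := by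
  obtain ⟨hx₁, hx₂⟩ := abs_le.mp hx
  set s := √(1 + x)
  have hs : s ^ 2 = 1 + x := Real.sq_sqrt (by linarith)
  have hs₀ : 0 < s := Real.sqrt_pos.mpr (by linarith)
  have hs₁ : 7 / 10 ≤ s := by nlinarith
  have key : |1 - s * (1 - x / 2)| ≤ x ^ 2 * s := by
    rw [abs_le]
    constructor
    · nlinarith [sq_nonneg (s - 1), sq_nonneg (s * (1 - x / 2 + x ^ 2) - 1)]
    · nlinarith [sq_nonneg (s - 1), sq_nonneg (s * (1 - x / 2 - x ^ 2) - 1)]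
  have : s⁻¹ - (1 - x / 2) = (1 - s * (1 - x / 2)) / s := by field_simp
  rwa [this, abs_div, abs_of_pos hs₀, div_le_iff₀ hs₀]

theorem abs_two_sqrt_sub_two_mul_div_sqrt_sub_le {p q r u : ℝ} (hu : u ≤ 1 / 2)
    (hp : |p| ≤ u) (hq : |q| ≤ u) (hr : |r| ≤ u) :
    |2 * √(1 + p) - 2 * (1 + r) / √(1 + q) - (p + q - 2 * r)| ≤ 6 * u ^ 2 := by
  have hp₂ : p ^ 2 ≤ u ^ 2 := sq_le_sq' (abs_le.mp hp).1 (abs_le.mp hp).2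
  have hq₂ : q ^ 2 ≤ u ^ 2 := sq_le_sq' (abs_le.mp hq).1 (abs_le.mp hq).2
  have h₁ := Real.abs_sqrt_one_add_sub_le (hp.trans hu)
  have h₂ := Real.abs_inv_sqrt_one_add_sub_le (hq.trans hu)
  set e₁ := √(1 + p) - 1 - p / 2
  set e₂ := (√(1 + q))⁻¹ - (1 - q / 2)
  have hexpand : 2 * √(1 + p) - 2 * (1 + r) / √(1 + q) - (p + q - 2 * r)
      = 2 * e₁ + r * q + -2 * ((1 + r) * e₂) := by
    simp only [e₁, e₂]; ring
  have hrq : |r * q| ≤ u ^ 2 := by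
    rw [abs_mul, sq]; exact mul_le_mul hr hq (abs_nonneg _) ((abs_nonneg _).trans hr)
  have hr₁ : |1 + r| ≤ 3 / 2 := by
    rw [abs_le]; constructor <;> linarith [(abs_le.mp hr).1, (abs_le.mp hr).2]
  have h₃ : |(1 + r) * e₂| ≤ 3 / 2 * u ^ 2 := by
    rw [abs_mul]; exact mul_le_mul hr₁ (h₂.trans hq₂) (abs_nonneg _) (by norm_num)
  calc _ = |2 * e₁ + r * q + -2 * ((1 + r) * e₂)| := by rw [hexpand]
    _ ≤ |2 * e₁| + |r * q| + |-2 * ((1 + r) * e₂)| := abs_add_three _ _ _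
    _ = 2 * |e₁| + |r * q| + 2 * |(1 + r) * e₂| := by simp only [abs_mul, abs_neg, abs_two]
    _ ≤ 6 * u ^ 2 := by linarith

theorem abs_two_sqrt_sub_two_mul_div_sqrt_sub_le_of_near {x y z a b t u ε : ℝ} (hu : u ≤ 1 / 2)
    (hx : |x - 1| ≤ u) (hy : |y - 1| ≤ u) (hz : |z - 1| ≤ u)
    (hxa : |x - 1 - a| ≤ ε) (hyb : |y - 1 - b| ≤ ε) (hzt : |z - 1 - t| ≤ ε) :
    |2 * √x - 2 * z / √y - (a + b - 2 * t)| ≤ 6 * u ^ 2 + 4 * ε := by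
  have htaylor := abs_two_sqrt_sub_two_mul_div_sqrt_sub_le hu hx hy hz
  simp only [add_sub_cancel] at htaylor
  calc _ = |(2 * √x - 2 * z / √y - (x - 1 + (y - 1) - 2 * (z - 1)))
          + (x - 1 - a) + (y - 1 - b) + -2 * (z - 1 - t)| := by ring_nf
    _ ≤ _ := by
      refine (abs_add_le _ _).trans ?_
      rw [abs_mul, abs_neg, abs_two]
      linarith [abs_add_three (2 * √x - 2 * z / √y - (x - 1 + (y - 1) - 2 * (z - 1)))
        (x - 1 - a) (y - 1 - b)]

theorem abs_excess_integrand_sub_norm_sub_sq_le {m n : Type*} [Fintype m] [Fintype n]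
    [DecidableEq n] (D A : Matrix m n ℝ) {K : ℝ} (hK : K = 2 ^ Fintype.card n * (Fintype.card n)!)
    (hu : ‖D‖ ^ 2 + ‖A‖ ^ 2 ≤ 1 / 4) (hKu : K * (‖D‖ ^ 2 + ‖A‖ ^ 2) ≤ 1) :
    |2 * √(1 + Dᵀ * D).det - 2 * (1 + Dᵀ * A).det / √(1 + Aᵀ * A).det - ‖D - A‖ ^ 2|
      ≤ (24 + 4 * K) * (‖D‖ ^ 2 + ‖A‖ ^ 2) ^ 2 := by
  set u := ‖D‖ ^ 2 + ‖A‖ ^ 2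
  have hKu₂ : K * u ^ 2 ≤ u := by nlinarith [sq_nonneg ‖D‖, sq_nonneg ‖A‖]
  have hu₁ : u ≤ 1 := by linarith
  have hD : ‖D‖ ^ 2 ≤ u := le_add_of_nonneg_right (by positivity)
  have hA : ‖A‖ ^ 2 ≤ u := le_add_of_nonneg_left (by positivity)
  have ht := abs_le.mp (Matrix.abs_trace_transpose_mul_le D A)
  have hDD : |(1 + Dᵀ * D).det - 1 - ‖D‖ ^ 2| ≤ K * u ^ 2 := by
    rw [hK, Matrix.frobenius_norm_sq_eq_trace]
    exact Matrix.abs_det_one_add_transpose_mul_sub_le hu₁ D D (by nlinarith)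
  have hAA : |(1 + Aᵀ * A).det - 1 - ‖A‖ ^ 2| ≤ K * u ^ 2 := by
    rw [hK, Matrix.frobenius_norm_sq_eq_trace]
    exact Matrix.abs_det_one_add_transpose_mul_sub_le hu₁ A A (by nlinarith)
  have hDA : |(1 + Dᵀ * A).det - 1 - (Dᵀ * A).trace| ≤ K * u ^ 2 := by
    rw [hK]
    exact Matrix.abs_det_one_add_transpose_mul_sub_le hu₁ D A
      (by nlinarith [sq_nonneg (‖D‖ - ‖A‖), norm_nonneg D, norm_nonneg A])
  rw [Matrix.frobenius_norm_sub_sq]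
  calc _ ≤ 6 * (2 * u) ^ 2 + 4 * (K * u ^ 2) :=
        abs_two_sqrt_sub_two_mul_div_sqrt_sub_le_of_near (by linarith)
          (abs_le.mpr ⟨by linarith [(abs_le.mp hDD).1], by linarith [(abs_le.mp hDD).2]⟩)
          (abs_le.mpr ⟨by linarith [(abs_le.mp hAA).1], by linarith [(abs_le.mp hAA).2]⟩)
          (abs_le.mpr ⟨by linarith [(abs_le.mp hDA).1], by linarith [(abs_le.mp hDA).2]⟩)
          hDD hAA hDA
    _ = (24 + 4 * K) * u ^ 2 := by ring

theorem hsNorm_eq_frobenius_norm {n m : ℕ} (D : Matrix (Fin n) (Fin m) ℝ) : hsNorm D = ‖D‖ := by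
  rw [hsNorm, ← Matrix.frobenius_norm_sq_eq_trace, Real.sqrt_sq (norm_nonneg _)]

theorem excess_integrand_expansion_general (m n : ℕ) :
    ∃ c C : ℝ, 0 < c ∧ 0 < C ∧
      ∀ D A : Matrix (Fin n) (Fin m) ℝ, hsNorm D ≤ c → hsNorm A ≤ c →
        |2 * Real.sqrt ((1 + Dᵀ * D).det)
            - 2 * (1 + Dᵀ * A).det / Real.sqrt ((1 + Aᵀ * A).det)
            - (hsNorm (D - A)) ^ 2|
          ≤ C * ((hsNorm D) ^ 4 + (hsNorm A) ^ 4) := by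
  set K : ℝ := 2 ^ m * (m)!
  have hK : 0 ≤ K := by positivity
  obtain ⟨c, hc₀, hc⟩ : ∃ c : ℝ, 0 < c ∧ c * (K + 1) = 1 / 4 :=
    ⟨1 / (4 * (K + 1)), by positivity, by field_simp⟩
  have hc₁ : c ≤ 1 / 4 := by nlinarith
  refine ⟨c, 48 + 8 * K, hc₀, by positivity, fun D A hD hA => ?_⟩
  simp only [hsNorm_eq_frobenius_norm] at hD hA ⊢
  have hu : ‖D‖ ^ 2 + ‖A‖ ^ 2 ≤ 2 * c ^ 2 := by
    have := pow_le_pow_left₀ (norm_nonneg D) hD 2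
    have := pow_le_pow_left₀ (norm_nonneg A) hA 2
    linarith
  have hKu : K * (‖D‖ ^ 2 + ‖A‖ ^ 2) ≤ 1 := by nlinarith [mul_le_mul_of_nonneg_left hu hK]
  calc _ ≤ (24 + 4 * K) * (‖D‖ ^ 2 + ‖A‖ ^ 2) ^ 2 :=
        abs_excess_integrand_sub_norm_sub_sq_le D A (by simp [K]) (by nlinarith) hKu
    _ ≤ (48 + 8 * K) * (‖D‖ ^ 4 + ‖A‖ ^ 4) := by nlinarith [sq_nonneg (‖D‖ ^ 2 - ‖A‖ ^ 2)]

/-- For all positive integers `m, n` there exist constants `c, C > 0`,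
depending only on `m` and `n`, such that for all real `n×m` matrices `D, A` with
`‖D‖ ≤ c` and `‖A‖ ≤ c` one has
`|2√(det(Iₘ + DᵀD)) − 2 det(Iₘ + DᵀA)/√(det(Iₘ + AᵀA)) − ‖D − A‖²| ≤ C (‖D‖⁴ + ‖A‖⁴)`. -/
theorem excess_integrand_expansion (m n : ℕ) (hm : 0 < m) (hn : 0 < n) :
    ∃ c C : ℝ, 0 < c ∧ 0 < C ∧
      ∀ D A : Matrix (Fin n) (Fin m) ℝ, hsNorm D ≤ c → hsNorm A ≤ c →
        |2 * Real.sqrt ((1 + Dᵀ * D).det)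
            - 2 * (1 + Dᵀ * A).det / Real.sqrt ((1 + Aᵀ * A).det)
            - (hsNorm (D - A)) ^ 2|
          ≤ C * ((hsNorm D) ^ 4 + (hsNorm A) ^ 4) :=
  excess_integrand_expansion_general m n
end
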